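/- arXiv:1411.2319 — 2 statements merged into one kernel-verified Lean document; each statement's English description precedes it below -/
import Mathlib

section
/- Let n ≥ 2 be an integer, R* > 0, and let φ : [R*,∞) → ℝ be differentiable and satisfy the translator profile ODE φ'(r) = (1+φ(r)²)(1 − (n−1)φ(r)/r) for all r ≥ R*, with φ(R*) = 0. Set α_n = 1 − 1/√(2(n−1)) and V(r) = ∫_{R*}^{r} φ(t) dt. Then for every r ≥ R*: V(r) ≥ (r−R*)²/(2(n−1)) − (2/α_n²)·log(r/R*) − 9R*²/(2(n−1)) ≥ (r−R*)²/(2(n−1)) − 24·log(r/R*) − 9R*²/(2(n−1)). -/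
/-!
Write `N = n - 1`. Lower barriers for `φ` come from a comparison principle: a function that
starts below `φ` and has strictly smaller slope than `φ` wherever it touches `φ` stays below `φ`.

If `R* < π / 2` (so `R* < 8 / 5`), the line `α (r - R*) / N` is such a barrier (this uses
`α (N + 1) < N`), and past `r₀ = 7R*/2` so is the curve `(r - R*) / N - c / r` with `c = 2 / α²`:
at a contact point the linear bound gives `N² c φ² ≥ 2 (r - R*)² > r²`, and the curve starts below
the line at `r₀` because `35 R*² (1 - α)³ α² ≤ 4`. Integrating `(r - R*) / N - c / r` from `r₀`
gives the `log` term.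

If `R* ≥ π / 2`, the ODE says `(r arctan φ)' = arctan φ + r - N φ`, so
`N V(r) ≥ (r² - R*²) / 2 - π r / 2`, as `0 ≤ arctan φ < π / 2`.

Finally `2 / α² ≤ 24` because `α ≥ 1 - 1 / √2`.
-/

open Real Set

theorem le_of_hasDerivAt_lt_of_eq {f g f' g' : ℝ → ℝ} {a : ℝ}
    (hf : ∀ x, a ≤ x → HasDerivAt f (f' x) x) (hg : ∀ x, a ≤ x → HasDerivAt g (g' x) x)
    (ha : f a ≤ g a) (hcontact : ∀ x, a ≤ x → f x = g x → f' x < g' x) :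
    ∀ x, a ≤ x → f x ≤ g x := fun _ hx =>
  image_le_of_deriv_right_lt_deriv_boundary'
    (fun y hy => (hf y hy.1).continuousAt.continuousWithinAt)
    (fun y hy => (hf y hy.1).hasDerivWithinAt) ha
    (fun y hy => (hg y hy.1).continuousAt.continuousWithinAt)
    (fun y hy => (hg y hy.1).hasDerivWithinAt) (fun y hy => hcontact y hy.1) ⟨hx, le_rfl⟩

theorem sub_le_integral_of_hasDerivAt_of_le {f g g' : ℝ → ℝ} {a b : ℝ} (hab : a ≤ b)
    (hg : ∀ x ∈ Icc a b, HasDerivAt g (g' x) x) (hf : ContinuousOn f (Icc a b))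
    (hle : ∀ x ∈ Icc a b, g' x ≤ f x) : g b - g a ≤ ∫ x in a..b, f x :=
  intervalIntegral.sub_le_integral_of_hasDeriv_right_of_le hab (HasDerivAt.continuousOn hg)
    (fun x hx => (hg x (Ioo_subset_Icc_self hx)).hasDerivWithinAt) hf.integrableOn_Icc
    (fun x hx => hle x (Ioo_subset_Icc_self hx))

noncomputable def translatorAlpha (N : ℝ) : ℝ := 1 - 1 / √(2 * N)

section TranslatorAlpha

variable {N : ℝ}

theorem le_sqrt_two_mul_of_one_le (hN : 1 ≤ N) : 141 / 100 ≤ √(2 * N) :=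
  le_sqrt_of_sq_le (by nlinarith)

theorem translatorAlpha_pos (hN : 1 ≤ N) : 0 < translatorAlpha N := by
  have := le_sqrt_two_mul_of_one_le hN
  rw [translatorAlpha, sub_pos, div_lt_one (by linarith)]
  linarith

theorem translatorAlpha_mul_add_one_lt (hN : 0 < N) : translatorAlpha N * (N + 1) < N := by
  have hs : √(2 * N) ^ 2 = 2 * N := sq_sqrt (by linarith)
  have hs0 : 0 < √(2 * N) := sqrt_pos.2 (by linarith)
  have : 1 < (N + 1) / √(2 * N) :=
    (one_lt_div hs0).2 (by nlinarith [sq_nonneg (√(2 * N) - 1)])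
  rw [translatorAlpha]
  linarith [show (1 - 1 / √(2 * N)) * (N + 1) = N + 1 - (N + 1) / √(2 * N) by ring]

theorem two_div_translatorAlpha_sq_le (hN : 1 ≤ N) : 2 / translatorAlpha N ^ 2 ≤ 24 := by
  have hs := le_sqrt_two_mul_of_one_le hN
  have hα : 29 / 100 ≤ translatorAlpha N := by
    rw [translatorAlpha, le_sub_comm, div_le_iff₀ (by linarith)]
    linarith
  rw [div_le_iff₀ (by positivity)]
  nlinarith

theorem sub_div_le_translatorAlpha_mul_div_at_seven_halves {Rs : ℝ} (hRs : 0 < Rs)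
    (hsmall : Rs < 8 / 5) (hN : 1 ≤ N) :
    (7 * Rs / 2 - Rs) / N - 2 / translatorAlpha N ^ 2 / (7 * Rs / 2)
      ≤ translatorAlpha N * (7 * Rs / 2 - Rs) / N := by
  have hs := le_sqrt_two_mul_of_one_le hN
  have hs2 : √(2 * N) ^ 2 = 2 * N := sq_sqrt (by linarith)
  set s := √(2 * N)
  have hs1 : 0 < s - 1 := by linarith
  have hα : translatorAlpha N = (s - 1) / s := by
    rw [translatorAlpha, one_sub_div (by positivity)]
  rw [hα, show N = s ^ 2 / 2 by linarith]
  field_simp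
  -- uses `R* < 8 / 5`, `4 (s - 1) ≤ s²` and `7 / 5 ≤ s`
  have key : 35 * Rs ^ 2 * (s - 1) ^ 2 ≤ 4 * s ^ 5 :=
    calc 35 * Rs ^ 2 * (s - 1) ^ 2 ≤ 35 * (64 / 25) * (s - 1) ^ 2 := by gcongr; nlinarith
      _ ≤ 28 / 5 * s ^ 4 := by nlinarith [sq_nonneg (s - 2)]
      _ ≤ 4 * s ^ 5 := by
        nlinarith [mul_le_mul_of_nonneg_left (show 7 / 5 ≤ s by linarith)
          (pow_nonneg (by linarith : (0 : ℝ) ≤ s) 4)]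
  nlinarith [key]

end TranslatorAlpha

section TranslatorProfile

variable {N Rs : ℝ} {φ : ℝ → ℝ}

theorem translatorProfile_nonneg
    (hode : ∀ r, Rs ≤ r → HasDerivAt φ ((1 + φ r ^ 2) * (1 - N * φ r / r)) r)
    (hφRs : φ Rs = 0) : ∀ r, Rs ≤ r → 0 ≤ φ r :=
  le_of_hasDerivAt_lt_of_eq (fun x _ => hasDerivAt_const x 0) hode hφRs.ge
    (fun x _ hx => by simp [← hx])

theorem translatorProfile_ge_linear {α : ℝ} (hRs : 0 < Rs) (hN : 0 < N) (hα : α * (N + 1) < N)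
    (hode : ∀ r, Rs ≤ r → HasDerivAt φ ((1 + φ r ^ 2) * (1 - N * φ r / r)) r)
    (hφRs : φ Rs = 0) : ∀ r, Rs ≤ r → α * (r - Rs) / N ≤ φ r := by
  refine le_of_hasDerivAt_lt_of_eq
    (fun x _ => (((hasDerivAt_id x).sub_const Rs).const_mul α).div_const N) hode
    (by simp [hφRs]) fun x hx hcontact => ?_
  have hx0 : 0 < x := hRs.trans_le hx
  set s := (x - Rs) / x with hs
  have hs0 : 0 ≤ s := div_nonneg (by linarith) hx0.le
  have hs1 : s ≤ 1 := (div_le_one hx0).2 (by linarith)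
  have hslope : N * φ x / x = α * s := by
    rw [← hcontact, hs]; field_simp
  have hgap : α / N < 1 - α * s ∧ 0 < 1 - α * s := by
    rw [div_lt_iff₀ hN]
    rcases le_or_gt 0 α with h | h
    · have := mul_nonneg (mul_nonneg h (sub_nonneg.2 hs1)) hN.le
      constructor <;> nlinarith
    · have := mul_nonneg (mul_nonneg (neg_nonneg.2 h.le) hs0) hN.le
      constructor <;> nlinarith
  rw [hslope, mul_one]
  nlinarith [mul_nonneg (sq_nonneg (φ x)) hgap.2.le]

theorem translatorProfile_ge_sub_div {α c r₀ : ℝ} (hRs : 0 < Rs) (hN : 1 ≤ N) (hα : 0 ≤ α)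
    (hc : 2 ≤ α ^ 2 * c)
    (hode : ∀ r, Rs ≤ r → HasDerivAt φ ((1 + φ r ^ 2) * (1 - N * φ r / r)) r)
    (hlin : ∀ r, Rs ≤ r → α * (r - Rs) / N ≤ φ r) (hr₀ : 7 * Rs / 2 ≤ r₀)
    (hanchor : (r₀ - Rs) / N - c / r₀ ≤ φ r₀) : ∀ r, r₀ ≤ r → (r - Rs) / N - c / r ≤ φ r := by
  have hN0 : 0 < N := by linarith
  have hc0 : 0 < c := by nlinarith [sq_nonneg α]
  have hbarrier : ∀ x, r₀ ≤ x →
      HasDerivAt (fun r => (r - Rs) / N - c / r) (1 / N + c / x ^ 2) x := fun x hx => by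
    have hx0 : x ≠ 0 := by linarith
    refine ((((hasDerivAt_id x).sub_const Rs).div_const N).sub
      ((hasDerivAt_const x c).div (hasDerivAt_id x) hx0)).congr_deriv ?_
    simp only [id]; field_simp; ring
  refine le_of_hasDerivAt_lt_of_eq hbarrier (fun x hx => hode x (by linarith)) hanchor
    fun x hx hcontact => ?_
  have hx0 : 0 < x := by linarith
  have hslope : 1 - N * φ x / x = Rs / x + N * c / x ^ 2 := by
    rw [← hcontact]; field_simp; ring
  have hφsq : 2 * (x - Rs) ^ 2 ≤ N ^ 2 * c * φ x ^ 2 := by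
    have hαx : 0 ≤ α * (x - Rs) := mul_nonneg hα (by linarith)
    have hαφ : α * (x - Rs) ≤ φ x * N := (div_le_iff₀ hN0).1 (hlin x (by linarith))
    calc 2 * (x - Rs) ^ 2 ≤ α ^ 2 * c * (x - Rs) ^ 2 := by gcongr
      _ = c * (α * (x - Rs)) ^ 2 := by ring
      _ ≤ c * (φ x * N) ^ 2 := by gcongr
      _ = N ^ 2 * c * φ x ^ 2 := by ring
  have hfar : x ^ 2 < 2 * (x - Rs) ^ 2 := by nlinarith
  have key : x ^ 2 + N * c < (1 + φ x ^ 2) * (Rs * x * N + N ^ 2 * c) := by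
    nlinarith [mul_pos (mul_pos hRs hx0) hN0,
      mul_nonneg (mul_nonneg (sq_nonneg (φ x)) hRs.le) (mul_nonneg hx0.le hN0.le),
      mul_nonneg (mul_nonneg (sub_nonneg.2 hN) hN0.le) hc0.le]
  have hexpand : (1 + φ x ^ 2) * (Rs / x + N * c / x ^ 2) - (1 / N + c / x ^ 2)
      = ((1 + φ x ^ 2) * (Rs * x * N + N ^ 2 * c) - x ^ 2 - N * c) / (N * x ^ 2) := by
    field_simp; ring
  rw [hslope, ← sub_pos, hexpand]
  exact div_pos (by linarith) (by positivity)

theorem integral_translatorProfile_ge_of_pi_le (hRs : 0 < Rs) (hN : 0 < N) (hpi : π ≤ 2 * Rs)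
    (hode : ∀ r, Rs ≤ r → HasDerivAt φ ((1 + φ r ^ 2) * (1 - N * φ r / r)) r)
    (hφRs : φ Rs = 0) :
    ∀ r, Rs ≤ r → (r - Rs) ^ 2 / (2 * N) - 9 * Rs ^ 2 / (2 * N) ≤ ∫ t in Rs..r, φ t := by
  intro r hr
  have hφ0 := translatorProfile_nonneg hode hφRs
  have hG : ∀ x ∈ Icc Rs r, HasDerivAt (fun x => x ^ 2 / 2 - x * arctan (φ x))
      (N * φ x - arctan (φ x)) x := fun x hx => by
    have hx0 : 0 < x := hRs.trans_le hx.1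
    refine (((hasDerivAt_pow 2 x).div_const 2).sub
      ((hasDerivAt_id x).mul ((hode x hx.1).arctan))).congr_deriv ?_
    have : 0 < 1 + φ x ^ 2 := by positivity
    simp only [id]; field_simp; ring
  have hφc : ContinuousOn (fun x => N * φ x) (Icc Rs r) := fun x hx =>
    ((hode x hx.1).continuousAt.const_mul N).continuousWithinAt
  have h := sub_le_integral_of_hasDerivAt_of_le hr hG hφc fun x hx =>
    sub_le_self _ (arctan_nonneg.2 (hφ0 x hx.1))
  rw [intervalIntegral.integral_const_mul, hφRs, arctan_zero] at h
  have harctan : arctan (φ r) ≤ π / 2 := (arctan_lt_pi_div_two _).le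
  rw [← sub_div, div_le_iff₀ (by positivity)]
  nlinarith [mul_le_mul_of_nonneg_left harctan (hRs.trans_le hr).le]

theorem integral_ge_of_nonneg_of_ge_sub_div {c r₀ : ℝ} (hRs : 0 < Rs) (hN : 0 < N) (hc : 0 ≤ c)
    (hRr₀ : Rs ≤ r₀) (hr₀ : r₀ ≤ 4 * Rs) (hφc : ContinuousOn φ (Ici Rs))
    (hφ0 : ∀ r, Rs ≤ r → 0 ≤ φ r) (hsharp : ∀ r, r₀ ≤ r → (r - Rs) / N - c / r ≤ φ r) :
    ∀ r, Rs ≤ r →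
      (r - Rs) ^ 2 / (2 * N) - c * log (r / Rs) - 9 * Rs ^ 2 / (2 * N) ≤ ∫ t in Rs..r, φ t := by
  intro r hr
  have hlog : 0 ≤ c * log (r / Rs) := mul_nonneg hc (log_nonneg ((one_le_div hRs).2 hr))
  have hsq : ∀ t, Rs ≤ t → t ≤ r₀ → (t - Rs) ^ 2 / (2 * N) ≤ 9 * Rs ^ 2 / (2 * N) :=
    fun t ht ht₀ => by gcongr; nlinarith
  rcases le_or_gt r r₀ with hr₀r | hr₀r
  · have : 0 ≤ ∫ t in Rs..r, φ t := intervalIntegral.integral_nonneg hr fun t ht => hφ0 t ht.1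
    linarith [hsq r hr hr₀r]
  have hint : ∀ a b, Rs ≤ a → a ≤ b → IntervalIntegrable φ MeasureTheory.volume a b :=
    fun a b ha hab => (hφc.mono fun t ht => ha.trans (uIcc_of_le hab ▸ ht).1).intervalIntegrable
  have hG : ∀ x ∈ Icc r₀ r, HasDerivAt (fun t => (t - Rs) ^ 2 / (2 * N) - c * log t)
      ((x - Rs) / N - c / x) x := fun x hx => by
    have hx0 : x ≠ 0 := by linarith [hx.1]
    refine ((((hasDerivAt_id x).sub_const Rs).pow 2).div_const (2 * N)).sub
      ((hasDerivAt_log hx0).const_mul c) |>.congr_deriv ?_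
    simp only [id]; field_simp; ring
  have hfar := sub_le_integral_of_hasDerivAt_of_le hr₀r.le hG
    (hφc.mono fun t ht => hRr₀.trans ht.1) (fun x hx => hsharp x hx.1)
  have hnear : 0 ≤ ∫ t in Rs..r₀, φ t :=
    intervalIntegral.integral_nonneg hRr₀ fun t ht => hφ0 t ht.1
  rw [← intervalIntegral.integral_add_adjacent_intervals (hint Rs r₀ le_rfl hRr₀)
    (hint r₀ r hRr₀ hr₀r.le)]
  have hlogr₀ : c * log Rs ≤ c * log r₀ := mul_le_mul_of_nonneg_left (log_le_log hRs hRr₀) hc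
  rw [log_div (by linarith) hRs.ne']
  linarith [hsq r₀ hRr₀ le_rfl]

theorem integral_translatorProfile_ge_of_lt (hRs : 0 < Rs) (hsmall : Rs < 8 / 5) (hN : 1 ≤ N)
    (hode : ∀ r, Rs ≤ r → HasDerivAt φ ((1 + φ r ^ 2) * (1 - N * φ r / r)) r)
    (hφRs : φ Rs = 0) :
    ∀ r, Rs ≤ r → (r - Rs) ^ 2 / (2 * N) - 2 / translatorAlpha N ^ 2 * log (r / Rs)
      - 9 * Rs ^ 2 / (2 * N) ≤ ∫ t in Rs..r, φ t := by
  have hN0 : 0 < N := by linarith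
  have hα := translatorAlpha_pos hN
  have hlin := translatorProfile_ge_linear hRs hN0 (translatorAlpha_mul_add_one_lt hN0) hode hφRs
  have hanchor := (sub_div_le_translatorAlpha_mul_div_at_seven_halves hRs hsmall hN).trans
    (hlin (7 * Rs / 2) (by linarith))
  have hsharp := translatorProfile_ge_sub_div hRs hN hα.le
    (by rw [mul_div_cancel₀ _ (by positivity)]) hode hlin le_rfl hanchor
  exact integral_ge_of_nonneg_of_ge_sub_div hRs hN0 (by positivity) (by linarith) (by linarith)
    (fun x hx => (hode x hx).continuousAt.continuousWithinAt)
    (translatorProfile_nonneg hode hφRs) hsharp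

end TranslatorProfile

/-- **Sharp quadratic lower bound on the height function of the translator profile.**
If `φ` solves `φ'(r) = (1+φ(r)²)(1 − (n−1)φ(r)/r)` on `[R*, ∞)` with `R* > 0` and
`φ(R*) = 0`, `αₙ = 1 − 1/√(2(n−1))`, `V(r) = ∫_{R*}^r φ`, then for all `r ≥ R*`:
`V(r) ≥ (r−R*)²/(2(n−1)) − (2/αₙ²) log(r/R*) − 9R*²/(2(n−1))
      ≥ (r−R*)²/(2(n−1)) − 24 log(r/R*) − 9R*²/(2(n−1))`. -/
theorem translator_profile_height_sharp_bound
    (n : ℕ) (hn : 2 ≤ n) (Rs : ℝ) (hRs : 0 < Rs) (φ : ℝ → ℝ)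
    (hode : ∀ r, Rs ≤ r →
      HasDerivAt φ ((1 + φ r ^ 2) * (1 - ((n : ℝ) - 1) * φ r / r)) r)
    (hφRs : φ Rs = 0)
    (α : ℝ) (hα : α = 1 - 1 / Real.sqrt (2 * ((n : ℝ) - 1)))
    (V : ℝ → ℝ) (hV : ∀ r, V r = ∫ t in Rs..r, φ t) :
    ∀ r, Rs ≤ r →
      (r - Rs) ^ 2 / (2 * ((n : ℝ) - 1)) - (2 / α ^ 2) * Real.log (r / Rs)
          - 9 * Rs ^ 2 / (2 * ((n : ℝ) - 1)) ≤ V r ∧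
      (r - Rs) ^ 2 / (2 * ((n : ℝ) - 1)) - 24 * Real.log (r / Rs)
          - 9 * Rs ^ 2 / (2 * ((n : ℝ) - 1)) ≤
        (r - Rs) ^ 2 / (2 * ((n : ℝ) - 1)) - (2 / α ^ 2) * Real.log (r / Rs)
          - 9 * Rs ^ 2 / (2 * ((n : ℝ) - 1)) := by
  intro r hr
  have hN : (1 : ℝ) ≤ (n : ℝ) - 1 := by
    have : (2 : ℝ) ≤ n := by exact_mod_cast hn
    linarith
  obtain rfl : α = translatorAlpha ((n : ℝ) - 1) := hα
  have hlog : 0 ≤ log (r / Rs) := log_nonneg ((one_le_div hRs).2 hr)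
  refine ⟨?_, by nlinarith [two_div_translatorAlpha_sq_le hN]⟩
  rw [hV r]
  rcases le_or_gt π (2 * Rs) with hbig | hsmall
  · have := integral_translatorProfile_ge_of_pi_le hRs (by linarith) hbig hode hφRs r hr
    have : 0 ≤ 2 / translatorAlpha ((n : ℝ) - 1) ^ 2 * log (r / Rs) := by positivity
    linarith
  · exact integral_translatorProfile_ge_of_lt hRs (by linarith [pi_lt_d2]) hN hode hφRs r hr
end

section
/- Let n ≥ 2 be an integer and R* ≥ 2, and define τ : [R*,∞) → ℝ by τ(r) = (r−R*)²/(2(n−1)) − (1/2)·log(1 + (r−R*)²). Then τ is a subsolution of the translator profile equation on [R*,∞); that is, for every r ≥ R*: τ''(r) ≤ (1 + τ'(r)²)·(1 − (n−1)·τ'(r)/r). -/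
/-!
With `s = r - R*`, `m = n - 1` and `a = 1 + s²` one has `τ' = s/m - s/a` and
`τ'' = 1/m - (1 - s²)/a²`. Multiplied by `r = R* + s`, the subsolution inequality is affine in
`R*` for fixed `s`, so it suffices to check it at `R* = 2` and that its slope `1 + τ'² - τ''` is
nonnegative. Clearing denominators turns both into polynomial inequalities in `s ≥ 0`, `m ≥ 1`.
For the one at `R* = 2` write `m = 1 + k`: when `s ≤ 1` all coefficients in `k` are nonnegative,
and when `s = 1 + u` the only negative coefficients, those of `uⁱk`, are absorbed by AM-GM
against `uⁱk²` and `uⁱ`.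
-/

open Real

noncomputable def modelAsymptotics (n R r : ℝ) : ℝ :=
  (r - R) ^ 2 / (2 * (n - 1)) - (1 / 2) * log (1 + (r - R) ^ 2)

section Derivatives

variable (n R r : ℝ)

theorem hasDerivAt_modelAsymptotics :
    HasDerivAt (modelAsymptotics n R) ((r - R) / (n - 1) - (r - R) / (1 + (r - R) ^ 2)) r := by
  have hshift : HasDerivAt (fun x : ℝ => x - R) 1 r := (hasDerivAt_id r).sub_const R
  have hsq : HasDerivAt (fun x : ℝ => (x - R) ^ 2) (2 * (r - R)) r := by
    simpa using hshift.fun_pow 2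
  have hlog : HasDerivAt (fun x : ℝ => log (1 + (x - R) ^ 2))
      (2 * (r - R) / (1 + (r - R) ^ 2)) r :=
    (hsq.const_add 1).log (by positivity)
  refine ((hsq.div_const (2 * (n - 1))).sub (hlog.const_mul (1 / 2))).congr_deriv ?_
  rw [mul_div_mul_left _ _ two_ne_zero]
  ring

theorem deriv_modelAsymptotics :
    deriv (modelAsymptotics n R) = fun r => (r - R) / (n - 1) - (r - R) / (1 + (r - R) ^ 2) :=
  funext fun r => (hasDerivAt_modelAsymptotics n R r).deriv

theorem hasDerivAt_deriv_modelAsymptotics :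
    HasDerivAt (deriv (modelAsymptotics n R))
      (1 / (n - 1) - (1 - (r - R) ^ 2) / (1 + (r - R) ^ 2) ^ 2) r := by
  rw [deriv_modelAsymptotics]
  have hshift : HasDerivAt (fun x : ℝ => x - R) 1 r := (hasDerivAt_id r).sub_const R
  have hsq : HasDerivAt (fun x : ℝ => 1 + (x - R) ^ 2) (2 * (r - R)) r := by
    simpa using (hshift.fun_pow 2).const_add 1
  refine ((hshift.div_const (n - 1)).sub (hshift.div hsq (by positivity))).congr_deriv ?_
  ring

end Derivatives

-- Once the denominator `R + s` is cleared, both sides are affine in `R`.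
theorem le_mul_one_sub_div_of_slope_of_base {d p c s R : ℝ} (hs : 0 ≤ s) (hR : 2 ≤ R)
    (hslope : d ≤ 1 + p ^ 2) (hbase : (2 + s) * d ≤ (1 + p ^ 2) * (2 + s - c)) :
    d ≤ (1 + p ^ 2) * (1 - c / (R + s)) := by
  have hRs : 0 < R + s := by linarith
  rw [one_sub_div hRs.ne', mul_div_assoc', le_div_iff₀ hRs]
  nlinarith [mul_le_mul_of_nonneg_left hslope (sub_nonneg.mpr hR)]

def slopeDefect (s m : ℝ) : ℝ :=
  m * (m - 1) * (1 + s ^ 2) ^ 2 + s ^ 2 * (1 + s ^ 2 - m) ^ 2 + m ^ 2 * (1 - s ^ 2)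

def baseDefect (s m : ℝ) : ℝ :=
  (m ^ 2 * (1 + s ^ 2) ^ 2 + s ^ 2 * (1 + s ^ 2 - m) ^ 2) * (2 * (1 + s ^ 2) + m * s)
    - (2 + s) * m * (1 + s ^ 2) * ((1 + s ^ 2) ^ 2 - m * (1 - s ^ 2))

theorem slopeDefect_nonneg (s : ℝ) {m : ℝ} (hm : 1 ≤ m) : 0 ≤ slopeDefect s m := by
  unfold slopeDefect
  nlinarith [sq_nonneg (s ^ 2 * m - s ^ 2), sq_nonneg (s ^ 2 - m), sq_nonneg (m - 1),
    sq_nonneg (s ^ 3 - s), sq_nonneg (s ^ 4 + s ^ 2 - m)]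

theorem baseDefect_one_add (s k : ℝ) :
    baseDefect s (1 + k) =
      (2 + s - s ^ 3 - 2 * s ^ 4 - 3 * s ^ 5 + 2 * s ^ 6 + 2 * s ^ 8)
      + (6 + 4 * s + 6 * s ^ 2 + 3 * s ^ 3 - 2 * s ^ 4 - 4 * s ^ 5 - 2 * s ^ 6) * k
      + (4 + 4 * s + 8 * s ^ 2 + 7 * s ^ 3 + 6 * s ^ 4 + 2 * s ^ 6) * k ^ 2
      + (s + 3 * s ^ 3 + s ^ 5) * k ^ 3 := by
  unfold baseDefect
  ring

theorem baseDefect_nonneg_of_le_one {s k : ℝ} (hs : 0 ≤ s) (hs1 : s ≤ 1) (hk : 0 ≤ k) :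
    0 ≤ baseDefect s (1 + k) := by
  have hc0 : 0 ≤ 2 + s - s ^ 3 - 2 * s ^ 4 - 3 * s ^ 5 + 2 * s ^ 6 + 2 * s ^ 8 := by
    nlinarith [sq_nonneg (s ^ 4 - s ^ 2), sq_nonneg (s ^ 3 - s), sq_nonneg (s - 1),
      sq_nonneg (s ^ 2 - 1), mul_nonneg hs (sq_nonneg (s ^ 2 - 1)),
      sq_nonneg (s ^ 4 - s ^ 2 - s), sq_nonneg (s ^ 3 - s ^ 2)]
  have hc1 : 0 ≤ 6 + 4 * s + 6 * s ^ 2 + 3 * s ^ 3 - 2 * s ^ 4 - 4 * s ^ 5 - 2 * s ^ 6 := by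
    nlinarith [pow_le_pow_of_le_one hs hs1 (show 2 ≤ 4 by norm_num),
      pow_le_pow_of_le_one hs hs1 (show 1 ≤ 5 by norm_num),
      pow_le_pow_of_le_one hs hs1 (show 3 ≤ 6 by norm_num)]
  rw [baseDefect_one_add]
  have hc2 : 0 ≤ 4 + 4 * s + 8 * s ^ 2 + 7 * s ^ 3 + 6 * s ^ 4 + 2 * s ^ 6 := by positivity
  have hc3 : 0 ≤ s + 3 * s ^ 3 + s ^ 5 := by positivity
  linarith [mul_nonneg hc1 hk, mul_nonneg hc2 (pow_nonneg hk 2), mul_nonneg hc3 (pow_nonneg hk 3)]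

theorem baseDefect_nonneg_of_one_le {u k : ℝ} (hu : 0 ≤ u) (hk : 0 ≤ k) :
    0 ≤ baseDefect (1 + u) (1 + k) := by
  unfold baseDefect
  have := pow_nonneg hk 2
  have := pow_nonneg hk 3
  nlinarith [mul_nonneg hu (sq_nonneg (k - 2 / 5)),
    mul_nonneg (pow_nonneg hu 2) (sq_nonneg (k - 1)),
    mul_nonneg (pow_nonneg hu 3) (sq_nonneg (k - 1)),
    mul_nonneg (pow_nonneg hu 4) (sq_nonneg (k - 1)),
    mul_nonneg (pow_nonneg hu 5) (sq_nonneg (k - 1)),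
    mul_nonneg (pow_nonneg hu 6) (sq_nonneg (k - 1)),
    pow_nonneg hu 2, pow_nonneg hu 3, pow_nonneg hu 4, pow_nonneg hu 5, pow_nonneg hu 6,
    pow_nonneg hu 7, pow_nonneg hu 8]

theorem baseDefect_nonneg {s m : ℝ} (hs : 0 ≤ s) (hm : 1 ≤ m) : 0 ≤ baseDefect s m := by
  obtain ⟨k, hk, rfl⟩ : ∃ k, 0 ≤ k ∧ m = 1 + k := ⟨m - 1, by linarith, by ring⟩
  rcases le_total s 1 with hs1 | hs1
  · exact baseDefect_nonneg_of_le_one hs hs1 hk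
  · obtain ⟨u, hu, rfl⟩ : ∃ u, 0 ≤ u ∧ s = 1 + u := ⟨s - 1, by linarith, by ring⟩
    exact baseDefect_nonneg_of_one_le hu hk

section ModelInequality

variable {s m : ℝ}

theorem model_second_deriv_le_one_add_sq (hm : 1 ≤ m) :
    1 / m - (1 - s ^ 2) / (1 + s ^ 2) ^ 2 ≤ 1 + (s / m - s / (1 + s ^ 2)) ^ 2 := by
  have ha : 0 < 1 + s ^ 2 := by positivity
  have hm0 : 0 < m := by linarith
  have key : 1 + (s / m - s / (1 + s ^ 2)) ^ 2 - (1 / m - (1 - s ^ 2) / (1 + s ^ 2) ^ 2)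
      = slopeDefect s m / (m ^ 2 * (1 + s ^ 2) ^ 2) := by
    unfold slopeDefect
    field_simp
    ring
  exact sub_nonneg.mp (key ▸ div_nonneg (slopeDefect_nonneg s hm) (by positivity))

theorem model_inequality_at_two (hs : 0 ≤ s) (hm : 1 ≤ m) :
    (2 + s) * (1 / m - (1 - s ^ 2) / (1 + s ^ 2) ^ 2)
      ≤ (1 + (s / m - s / (1 + s ^ 2)) ^ 2) * (2 + s - m * (s / m - s / (1 + s ^ 2))) := by
  have ha : 0 < 1 + s ^ 2 := by positivity
  have hm0 : 0 < m := by linarith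
  have key : (1 + (s / m - s / (1 + s ^ 2)) ^ 2) * (2 + s - m * (s / m - s / (1 + s ^ 2)))
        - (2 + s) * (1 / m - (1 - s ^ 2) / (1 + s ^ 2) ^ 2)
      = baseDefect s m / (m ^ 2 * (1 + s ^ 2) ^ 3) := by
    unfold baseDefect
    field_simp
    ring
  exact sub_nonneg.mp (key ▸ div_nonneg (baseDefect_nonneg hs hm) (by positivity))

theorem model_subsolution_inequality {R : ℝ} (hs : 0 ≤ s) (hm : 1 ≤ m) (hR : 2 ≤ R) :
    1 / m - (1 - s ^ 2) / (1 + s ^ 2) ^ 2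
      ≤ (1 + (s / m - s / (1 + s ^ 2)) ^ 2) * (1 - m * (s / m - s / (1 + s ^ 2)) / (R + s)) :=
  le_mul_one_sub_div_of_slope_of_base hs hR (model_second_deriv_le_one_add_sq hm)
    (model_inequality_at_two hs hm)

end ModelInequality

/-- **The model asymptotics function is a subsolution for base radius `R* ≥ 2`.**
For `n ≥ 2`, `R* ≥ 2` and `τ(r) = (r−R*)²/(2(n−1)) − (1/2)log(1+(r−R*)²)`, one has
`τ''(r) ≤ (1+τ'(r)²)(1 − (n−1)τ'(r)/r)` for all `r ≥ R*`. -/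
theorem subsolution_large_base
    (n : ℕ) (hn : 2 ≤ n) (Rs : ℝ) (hRs : 2 ≤ Rs)
    (τ : ℝ → ℝ)
    (hτ : ∀ r, τ r = (r - Rs) ^ 2 / (2 * ((n : ℝ) - 1))
        - (1 / 2) * Real.log (1 + (r - Rs) ^ 2)) :
    ∀ r, Rs ≤ r →
      deriv (deriv τ) r ≤
        (1 + deriv τ r ^ 2) * (1 - ((n : ℝ) - 1) * deriv τ r / r) := by
  intro r hr
  obtain rfl : τ = modelAsymptotics n Rs := funext hτ
  have hm : (1 : ℝ) ≤ n - 1 := by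
    have : (2 : ℝ) ≤ n := by exact_mod_cast hn
    linarith
  have h := model_subsolution_inequality (sub_nonneg.mpr hr) hm hRs
  rw [add_sub_cancel] at h
  rwa [(hasDerivAt_deriv_modelAsymptotics n Rs r).deriv, deriv_modelAsymptotics]
end
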